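/- Let α₁, α₂, α₃, α₄, β₁, β₂, β₃, β₄ ∈ ℝ satisfy 2α₁+α₂+α₃ > 0, α₂+α₃ > 0, α₃−α₂ > 0, α₄ > 0, 2β₁+β₂+β₃ > 0, β₂+β₃ > 0, β₃−β₂ > 0, β₄ > 0. Then there exists a constant Cc > 0 such that for all E, K ∈ Matrix (Fin 2) (Fin 2) ℝ and all e, k ∈ ℝ²: α₁(trace E)² + α₂ trace(E²) + α₃ ‖E‖² + α₄ ‖e‖² + β₁(trace K)² + β₂ trace(K²) + β₃ ‖K‖² + β₄ ‖k‖² ≥ Cc (‖E‖² + ‖e‖² + ‖K‖² + ‖k‖²). (Coercivity of the quadratic strain energy (38) of a physically linear isotropic 6-parameter shell under the conditions (39).) -/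

import Mathlib

/-!
In the coordinates `tr E`, `E₀₀ - E₁₁`, `E₀₁ + E₁₀`, `E₀₁ - E₁₀` (spherical, deviatoric and skew
parts of `E`) both `2‖E‖²` and twice the isotropic energy `α₁ (tr E)² + α₂ tr(E²) + α₃ ‖E‖²` are
diagonal: the former with all weights `1`, the latter with weights `2α₁ + α₂ + α₃`, `α₂ + α₃`
(twice) and `α₃ - α₂`. So the energy dominates `‖E‖²` times the smallest of these weights, which
conditions (39) make positive; the vector terms only need `α₄, β₄ > 0`.
-/

open Matrix

/-- Squared Frobenius norm `‖X‖² = tr(XᵀX)`. -/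
def frobSq (X : Matrix (Fin 2) (Fin 2) ℝ) : ℝ := trace (Xᵀ * X)

/-- The smallest eigenvalue of `E ↦ α₁ (tr E)² + α₂ tr(E²) + α₃ ‖E‖²` relative to `‖E‖²`. -/
def isotropicModulus (α₁ α₂ α₃ : ℝ) : ℝ :=
  min (2 * α₁ + α₂ + α₃) (min (α₂ + α₃) (α₃ - α₂))

theorem isotropicModulus_pos {α₁ α₂ α₃ : ℝ} (h₁ : 0 < 2 * α₁ + α₂ + α₃) (h₂ : 0 < α₂ + α₃)
    (h₃ : 0 < α₃ - α₂) : 0 < isotropicModulus α₁ α₂ α₃ :=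
  lt_min h₁ (lt_min h₂ h₃)

theorem two_mul_frobSq (E : Matrix (Fin 2) (Fin 2) ℝ) :
    2 * frobSq E = trace E ^ 2 + (E 0 0 - E 1 1) ^ 2 + (E 0 1 + E 1 0) ^ 2
      + (E 0 1 - E 1 0) ^ 2 := by
  simp only [frobSq, trace_fin_two, mul_apply, Fin.sum_univ_two, transpose_apply]
  ring

theorem two_mul_isotropicEnergy (α₁ α₂ α₃ : ℝ) (E : Matrix (Fin 2) (Fin 2) ℝ) :
    2 * (α₁ * trace E ^ 2 + α₂ * trace (E * E) + α₃ * frobSq E) =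
      (2 * α₁ + α₂ + α₃) * trace E ^ 2
        + (α₂ + α₃) * ((E 0 0 - E 1 1) ^ 2 + (E 0 1 + E 1 0) ^ 2)
        + (α₃ - α₂) * (E 0 1 - E 1 0) ^ 2 := by
  simp only [frobSq, trace_fin_two, mul_apply, Fin.sum_univ_two, transpose_apply]
  ring

theorem mul_frobSq_le_isotropicEnergy {α₁ α₂ α₃ μ : ℝ} (hμ : μ ≤ isotropicModulus α₁ α₂ α₃)
    (E : Matrix (Fin 2) (Fin 2) ℝ) :
    μ * frobSq E ≤ α₁ * trace E ^ 2 + α₂ * trace (E * E) + α₃ * frobSq E := by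
  obtain ⟨h₁, h₂, h₃⟩ : μ ≤ 2 * α₁ + α₂ + α₃ ∧ μ ≤ α₂ + α₃ ∧ μ ≤ α₃ - α₂ := by
    simpa only [isotropicModulus, le_min_iff] using hμ
  suffices μ * (2 * frobSq E) ≤ 2 * (α₁ * trace E ^ 2 + α₂ * trace (E * E) + α₃ * frobSq E) by
    linarith
  rw [two_mul_frobSq, two_mul_isotropicEnergy]
  linarith [mul_le_mul_of_nonneg_right h₁ (sq_nonneg (trace E)),
    mul_le_mul_of_nonneg_right h₂ (add_nonneg (sq_nonneg (E 0 0 - E 1 1))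
      (sq_nonneg (E 0 1 + E 1 0))),
    mul_le_mul_of_nonneg_right h₃ (sq_nonneg (E 0 1 - E 1 0))]

theorem mul_dotProduct_self_le {ι : Type*} [Fintype ι] {μ a : ℝ} (h : μ ≤ a) (v : ι → ℝ) :
    μ * (v ⬝ᵥ v) ≤ a * (v ⬝ᵥ v) :=
  mul_le_mul_of_nonneg_right h (by simpa using dotProduct_self_star_nonneg v)

theorem strain_energy_coercive
    (α₁ α₂ α₃ α₄ β₁ β₂ β₃ β₄ : ℝ)
    (ha1 : 0 < 2 * α₁ + α₂ + α₃) (ha2 : 0 < α₂ + α₃) (ha3 : 0 < α₃ - α₂)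
    (ha4 : 0 < α₄)
    (hb1 : 0 < 2 * β₁ + β₂ + β₃) (hb2 : 0 < β₂ + β₃) (hb3 : 0 < β₃ - β₂)
    (hb4 : 0 < β₄) :
    ∃ Cc : ℝ, 0 < Cc ∧
      ∀ (E K : Matrix (Fin 2) (Fin 2) ℝ) (e k : Fin 2 → ℝ),
        α₁ * (trace E) ^ 2 + α₂ * trace (E * E) + α₃ * frobSq E + α₄ * (e ⬝ᵥ e)
          + β₁ * (trace K) ^ 2 + β₂ * trace (K * K) + β₃ * frobSq K + β₄ * (k ⬝ᵥ k)
        ≥ Cc * (frobSq E + e ⬝ᵥ e + frobSq K + k ⬝ᵥ k) := by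
  set Cc := min (min (isotropicModulus α₁ α₂ α₃) α₄) (min (isotropicModulus β₁ β₂ β₃) β₄)
  have hCc_pos : 0 < Cc :=
    lt_min (lt_min (isotropicModulus_pos ha1 ha2 ha3) ha4)
      (lt_min (isotropicModulus_pos hb1 hb2 hb3) hb4)
  have hCα : Cc ≤ isotropicModulus α₁ α₂ α₃ := (min_le_left _ _).trans (min_le_left _ _)
  have hCα₄ : Cc ≤ α₄ := (min_le_left _ _).trans (min_le_right _ _)
  have hCβ : Cc ≤ isotropicModulus β₁ β₂ β₃ := (min_le_right _ _).trans (min_le_left _ _)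
  have hCβ₄ : Cc ≤ β₄ := (min_le_right _ _).trans (min_le_right _ _)
  refine ⟨Cc, hCc_pos, fun E K e k => ?_⟩
  linarith [mul_frobSq_le_isotropicEnergy hCα E, mul_dotProduct_self_le hCα₄ e,
    mul_frobSq_le_isotropicEnergy hCβ K, mul_dotProduct_self_le hCβ₄ k]
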